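/- Let ŝ₁, …, ŝ_M be independent Gaussian random vectors in ℝ^A with ŝᵢ ~ N(sᵢ, λᵢΣᵢ). Then for any weights w_c ∈ ℝ^A, temperature τ > 0, and nonnegative coefficients p_i^c summing appropriately, the expected log-sum-exp loss E[∑_i ∑_c p_i^c log(∑_k exp(w_cᵀ(ŝᵢ − ŝ_k)/τ))] is upper bounded by ∑_i ∑_c p_i^c log(∑_k exp(w_cᵀ(sᵢ − s_k)/τ + w_cᵀ(λᵢΣᵢ + λ_kΣ_k)w_c/(2τ²))). -/

import Mathlib

/-!
For fixed `i` and `c`, the projections `w_cᵀ ŝ_k` are independent real Gaussians, so for `k ≠ i`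
the difference `w_cᵀ (ŝ_i - ŝ_k)` is Gaussian with variance `w_cᵀ (λ_i Σ_i + λ_k Σ_k) w_c`, and the
Gaussian moment-generating function computes `E[exp (w_cᵀ (ŝ_i - ŝ_k) / τ)]` exactly; the term
`k = i` is `1`, below the corresponding bound. Jensen's inequality for the concave `log` on
`[1, ∞)`, where the sum over `k` lives, then moves the expectation inside the logarithm.
-/

open MeasureTheory ProbabilityTheory Matrix Finset

def IsGaussianVec {Ω : Type*} [MeasurableSpace Ω] (μ : Measure Ω) {d : ℕ}
    (x : Ω → Fin d → ℝ) (m : Fin d → ℝ) (S : Matrix (Fin d) (Fin d) ℝ) : Prop :=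
  ∀ a : Fin d → ℝ,
    μ.map (fun ω => a ⬝ᵥ x ω) = gaussianReal (a ⬝ᵥ m) (a ⬝ᵥ S.mulVec a).toNNReal

open Real
open scoped NNReal

section GaussianDifference

variable {Ω : Type*} [MeasurableSpace Ω] {P : Measure Ω} {X Y : Ω → ℝ} {m₁ m₂ : ℝ}
  {v₁ v₂ : ℝ≥0}

lemma gaussianReal_sub_gaussianReal_of_indepFun (hXY : IndepFun X Y P)
    (hX : P.map X = gaussianReal m₁ v₁) (hY : P.map Y = gaussianReal m₂ v₂) :
    P.map (X - Y) = gaussianReal (m₁ - m₂) (v₁ + v₂) := by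
  have hY_meas : AEMeasurable Y P := .of_map_ne_zero (by simp [NeZero.ne, hY])
  have hnegY : P.map (-Y) = gaussianReal (-m₂) v₂ := by
    rw [show -Y = Neg.neg ∘ Y from rfl, ← AEMeasurable.map_map_of_aemeasurable
      measurable_neg.aemeasurable hY_meas, hY, gaussianReal_map_neg]
  rw [sub_eq_add_neg, sub_eq_add_neg]
  exact gaussianReal_add_gaussianReal_of_indepFun (hXY.comp measurable_id measurable_neg) hX hnegY

lemma integrable_exp_sub_div_of_indepFun [IsProbabilityMeasure P] (hXY : IndepFun X Y P)
    (hX : P.map X = gaussianReal m₁ v₁) (hY : P.map Y = gaussianReal m₂ v₂) (τ : ℝ) :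
    Integrable (fun ω ↦ exp ((X ω - Y ω) / τ)) P := by
  have h := mgf_pos_iff.mp ((mgf_gaussianReal
    (gaussianReal_sub_gaussianReal_of_indepFun hXY hX hY) τ⁻¹).symm ▸ exp_pos _)
  simpa only [Pi.sub_apply, div_eq_inv_mul] using h

lemma integral_exp_sub_div_of_indepFun (hXY : IndepFun X Y P)
    (hX : P.map X = gaussianReal m₁ v₁) (hY : P.map Y = gaussianReal m₂ v₂) (τ : ℝ) :
    ∫ ω, exp ((X ω - Y ω) / τ) ∂P = exp ((m₁ - m₂) / τ + (v₁ + v₂) / (2 * τ ^ 2)) := by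
  have h := mgf_gaussianReal (gaussianReal_sub_gaussianReal_of_indepFun hXY hX hY) τ⁻¹
  simp only [mgf, Pi.sub_apply, NNReal.coe_add] at h
  convert h using 2
  · simp only [div_eq_inv_mul]
  · ring

end GaussianDifference

section LogJensen

variable {Ω : Type*} [MeasurableSpace Ω] {P : Measure Ω} {Z : Ω → ℝ}

lemma integrable_log_of_one_le (hZ : Integrable Z P) (h1 : ∀ᵐ ω ∂P, 1 ≤ Z ω) :
    Integrable (fun ω ↦ log (Z ω)) P := by
  refine hZ.mono (measurable_log.comp_aemeasurable hZ.aemeasurable).aestronglyMeasurable ?_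
  filter_upwards [h1] with ω hω
  rw [norm_of_nonneg (log_nonneg hω), norm_of_nonneg (by linarith)]
  exact (log_le_sub_one_of_pos (by linarith)).trans (by linarith)

lemma integral_log_le_log_integral [IsProbabilityMeasure P] (hZ : Integrable Z P)
    (h1 : ∀ᵐ ω ∂P, 1 ≤ Z ω) : ∫ ω, log (Z ω) ∂P ≤ log (∫ ω, Z ω ∂P) :=
  (strictConcaveOn_log_Ioi.concaveOn.subset (fun _ hx ↦ one_pos.trans_le hx)
    (convex_Ici 1)).le_map_integral
    (continuousOn_log.mono fun _ hx ↦ (one_pos.trans_le hx).ne') isClosed_Ici h1 hZ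
    (integrable_log_of_one_le hZ h1)

end LogJensen

lemma one_le_sum_exp_sub_div {ι : Type*} [Fintype ι] (x : ι → ℝ) (τ : ℝ) (i : ι) :
    1 ≤ ∑ k, exp ((x i - x k) / τ) := by
  calc (1 : ℝ) = exp ((x i - x i) / τ) := by simp
    _ ≤ ∑ k, exp ((x i - x k) / τ) :=
      single_le_sum (f := fun k ↦ exp ((x i - x k) / τ)) (fun _ _ ↦ (exp_pos _).le) (mem_univ i)

section GaussianFamily

variable {Ω ι : Type*} [MeasurableSpace Ω] {P : Measure Ω} [IsProbabilityMeasure P]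
  {X : ι → Ω → ℝ} {m : ι → ℝ} {v : ι → ℝ≥0}

lemma integrable_exp_sub_div (hX : ∀ j, P.map (X j) = gaussianReal (m j) (v j))
    (hind : Pairwise fun j k ↦ IndepFun (X j) (X k) P) (τ : ℝ) (i k : ι) :
    Integrable (fun ω ↦ exp ((X i ω - X k ω) / τ)) P := by
  rcases eq_or_ne i k with rfl | hik
  · simp
  · exact integrable_exp_sub_div_of_indepFun (hind hik) (hX i) (hX k) τ

lemma integral_exp_sub_div_le (hX : ∀ j, P.map (X j) = gaussianReal (m j) (v j))
    (hind : Pairwise fun j k ↦ IndepFun (X j) (X k) P) (τ : ℝ) (i k : ι) :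
    ∫ ω, exp ((X i ω - X k ω) / τ) ∂P ≤ exp ((m i - m k) / τ + (v i + v k) / (2 * τ ^ 2)) := by
  rcases eq_or_ne i k with rfl | hik
  · simp only [sub_self, zero_div, exp_zero, integral_const, probReal_univ, smul_eq_mul,
      mul_one, zero_add, one_le_exp_iff]
    positivity
  · exact (integral_exp_sub_div_of_indepFun (hind hik) (hX i) (hX k) τ).le

variable [Fintype ι]

lemma integrable_log_sum_exp_sub_div (hX : ∀ j, P.map (X j) = gaussianReal (m j) (v j))
    (hind : Pairwise fun j k ↦ IndepFun (X j) (X k) P) (τ : ℝ) (i : ι) :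
    Integrable (fun ω ↦ log (∑ k, exp ((X i ω - X k ω) / τ))) P :=
  integrable_log_of_one_le
    (integrable_finsetSum univ fun k _ ↦ integrable_exp_sub_div hX hind τ i k)
    (ae_of_all _ fun ω ↦ one_le_sum_exp_sub_div (X · ω) τ i)

lemma integral_log_sum_exp_sub_div_le (hX : ∀ j, P.map (X j) = gaussianReal (m j) (v j))
    (hind : Pairwise fun j k ↦ IndepFun (X j) (X k) P) (τ : ℝ) (i : ι) :
    ∫ ω, log (∑ k, exp ((X i ω - X k ω) / τ)) ∂P
      ≤ log (∑ k, exp ((m i - m k) / τ + (v i + v k) / (2 * τ ^ 2))) := by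
  have hint := integrable_finsetSum univ fun k _ ↦ integrable_exp_sub_div hX hind τ i k
  have h1 : ∀ᵐ ω ∂P, 1 ≤ ∑ k, exp ((X i ω - X k ω) / τ) :=
    ae_of_all _ fun ω ↦ one_le_sum_exp_sub_div (X · ω) τ i
  calc ∫ ω, log (∑ k, exp ((X i ω - X k ω) / τ)) ∂P
      ≤ log (∫ ω, ∑ k, exp ((X i ω - X k ω) / τ) ∂P) := integral_log_le_log_integral hint h1
    _ ≤ log (∑ k, exp ((m i - m k) / τ + (v i + v k) / (2 * τ ^ 2))) := by
      refine log_le_log (one_pos.trans_le ?_) ?_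
      · simpa using integral_mono_ae (integrable_const 1) hint h1
      rw [integral_finsetSum univ fun k _ ↦ integrable_exp_sub_div hX hind τ i k]
      exact sum_le_sum fun k _ ↦ integral_exp_sub_div_le hX hind τ i k

end GaussianFamily

theorem fakd_upper_bound_general {Ω : Type*} [MeasurableSpace Ω] (μ : Measure Ω)
    [IsProbabilityMeasure μ] {A M C : ℕ}
    (shat : Fin M → Ω → Fin A → ℝ) (s : Fin M → Fin A → ℝ)
    (lam : Fin M → ℝ) (hlam : ∀ i, 0 ≤ lam i)
    (Sig : Fin M → Matrix (Fin A) (Fin A) ℝ) (hSig : ∀ i, (Sig i).PosSemidef)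
    (hgauss : ∀ i, IsGaussianVec μ (shat i) (s i) (lam i • Sig i))
    (hindep : iIndepFun shat μ)
    (w : Fin C → Fin A → ℝ) (τ : ℝ)
    (p : Fin M → Fin C → ℝ) (hp : ∀ i c, 0 ≤ p i c) :
    ∫ ω, ∑ i : Fin M, ∑ c : Fin C, p i c *
        Real.log (∑ k : Fin M, Real.exp (w c ⬝ᵥ (shat i ω - shat k ω) / τ)) ∂μ
      ≤ ∑ i : Fin M, ∑ c : Fin C, p i c *
          Real.log (∑ k : Fin M, Real.exp (w c ⬝ᵥ (s i - s k) / τ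
            + w c ⬝ᵥ (lam i • Sig i + lam k • Sig k).mulVec (w c) / (2 * τ ^ 2))) := by
  have hvar (c j) : ((w c ⬝ᵥ (lam j • Sig j) *ᵥ w c).toNNReal : ℝ)
      = w c ⬝ᵥ (lam j • Sig j) *ᵥ w c :=
    coe_toNNReal _ (by simpa using ((hSig j).smul (hlam j)).dotProduct_mulVec_nonneg (w c))
  have hind (c) : Pairwise fun j k ↦ IndepFun (w c ⬝ᵥ shat j ·) (w c ⬝ᵥ shat k ·) μ :=
    fun j k hjk ↦ (hindep.indepFun hjk).comp (φ := (w c ⬝ᵥ ·)) (ψ := (w c ⬝ᵥ ·))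
      (by fun_prop) (by fun_prop)
  have hint (i c) : Integrable
      (fun ω ↦ p i c * log (∑ k, exp ((w c ⬝ᵥ shat i ω - w c ⬝ᵥ shat k ω) / τ))) μ :=
    (integrable_log_sum_exp_sub_div (fun j ↦ hgauss j (w c)) (hind c) τ i).const_mul _
  have hle (i c) : ∫ ω, log (∑ k, exp ((w c ⬝ᵥ shat i ω - w c ⬝ᵥ shat k ω) / τ)) ∂μ
      ≤ log (∑ k, exp ((w c ⬝ᵥ s i - w c ⬝ᵥ s k) / τ
        + (w c ⬝ᵥ (lam i • Sig i) *ᵥ w c + w c ⬝ᵥ (lam k • Sig k) *ᵥ w c) / (2 * τ ^ 2))) := by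
    simpa only [hvar] using
      integral_log_sum_exp_sub_div_le (fun j ↦ hgauss j (w c)) (hind c) τ i
  simp only [dotProduct_sub, add_mulVec, dotProduct_add]
  rw [integral_finsetSum _ fun i _ ↦ integrable_finsetSum _ fun c _ ↦ hint i c]
  refine sum_le_sum fun i _ ↦ ?_
  rw [integral_finsetSum _ fun c _ ↦ hint i c]
  refine sum_le_sum fun c _ ↦ ?_
  rw [integral_const_mul]
  exact mul_le_mul_of_nonneg_left (hle i c) (hp i c)

/-- Theorem 1 of the FAKD paper: the expected log-sum-exp distillation loss over
independent Gaussian feature augmentations is upper bounded by the empirical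
surrogate loss. -/
theorem fakd_upper_bound {Ω : Type*} [MeasurableSpace Ω] (μ : Measure Ω)
    [IsProbabilityMeasure μ] {A M C : ℕ}
    (shat : Fin M → Ω → Fin A → ℝ) (s : Fin M → Fin A → ℝ)
    (lam : Fin M → ℝ) (hlam : ∀ i, 0 ≤ lam i)
    (Sig : Fin M → Matrix (Fin A) (Fin A) ℝ) (hSig : ∀ i, (Sig i).PosSemidef)
    (hgauss : ∀ i, IsGaussianVec μ (shat i) (s i) (lam i • Sig i))
    (hindep : iIndepFun shat μ)
    (w : Fin C → Fin A → ℝ) (τ : ℝ) (hτ : 0 < τ)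
    (p : Fin M → Fin C → ℝ) (hp : ∀ i c, 0 ≤ p i c) :
    ∫ ω, ∑ i : Fin M, ∑ c : Fin C, p i c *
        Real.log (∑ k : Fin M, Real.exp (w c ⬝ᵥ (shat i ω - shat k ω) / τ)) ∂μ
      ≤ ∑ i : Fin M, ∑ c : Fin C, p i c *
          Real.log (∑ k : Fin M, Real.exp (w c ⬝ᵥ (s i - s k) / τ
            + w c ⬝ᵥ (lam i • Sig i + lam k • Sig k).mulVec (w c) / (2 * τ ^ 2))) :=
  fakd_upper_bound_general μ shat s lam hlam Sig hSig hgauss hindep w τ p hp
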